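/- Let (𝒟_m)_{m∈ℕ} be a limit-conforming sequence of gradient discretisations, and for each m let u_m ∈ X_{𝒟_m} be such that the sequence (‖u_m‖_{𝒟_m})_{m∈ℕ} is bounded. Then there exists u ∈ W_G such that, along a subsequence as m → ∞, (P_{𝒟_m} u_m) converges weakly in L to u and (G_{𝒟_m} u_m) converges weakly in 𝐋 to Gu. -/

import Mathlib

open NormedSpace Filter Topology

noncomputable section

variable {L Lv : Type*} [NormedAddCommGroup L] [NormedSpace ℝ L]
  [NormedAddCommGroup Lv] [NormedSpace ℝ Lv]

/-- The seminorm `|u|_{L,V} = sup_{μ ∈ V \ {0}} |⟨μ,u⟩| / ‖μ‖` (equal to `0` when `V = {0}`,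
since `sSup ∅ = 0` in `ℝ`). -/
noncomputable def semV (V : Submodule ℝ (StrongDual ℝ L)) (u : L) : ℝ :=
  sSup ((fun μ : StrongDual ℝ L => |μ u| / ‖μ‖) '' {μ : StrongDual ℝ L | μ ∈ V ∧ μ ≠ 0})

/-- `IsWDpair W_G G φ w` says that `φ ∈ 𝐖_D` with `D φ = w`, i.e. the abstract Stokes formula
`⟨φ, G u⟩ + ⟨w, u⟩ = 0` holds for all `u ∈ W_G`. -/
def IsWDpair (WG : Submodule ℝ L) (G : ↥WG →ₗ[ℝ] Lv) (φ : StrongDual ℝ Lv) (w : StrongDual ℝ L) : Prop :=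
  ∀ u : ↥WG, φ (G u) + w (u : L) = 0

/-- A gradient discretisation `𝒟 = (X_𝒟, P_𝒟, G_𝒟)`: a finite-dimensional real vector space
`X`, a function reconstruction `P : X → L` and a gradient reconstruction `Gd : X → Lv`, such
that `v ↦ (|P v|_{L,V}^p + ‖Gd v‖^p)^{1/p}` is a norm on `X` (definiteness is the only
non-automatic condition). -/
structure GradDisc (L Lv : Type*) [NormedAddCommGroup L] [NormedSpace ℝ L]
    [NormedAddCommGroup Lv] [NormedSpace ℝ Lv]
    (V : Submodule ℝ (StrongDual ℝ L)) (p : ℝ) where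
  X : Type
  [instAddCommGroup : AddCommGroup X]
  [instModule : Module ℝ X]
  [instFin : FiniteDimensional ℝ X]
  P : X →ₗ[ℝ] L
  Gd : X →ₗ[ℝ] Lv
  dnorm_definite : ∀ v : X, (semV V (P v) ^ p + ‖Gd v‖ ^ p) ^ (1 / p) = 0 → v = 0

attribute [instance] GradDisc.instAddCommGroup GradDisc.instModule GradDisc.instFin

namespace GradDisc

variable {V : Submodule ℝ (StrongDual ℝ L)} {p : ℝ}

/-- The discrete norm `‖v‖_𝒟 = (|P_𝒟 v|_{L,V}^p + ‖G_𝒟 v‖_Lv^p)^{1/p}`. -/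
noncomputable def dnorm (D : GradDisc L Lv V p) (v : D.X) : ℝ :=
  (semV V (D.P v) ^ p + ‖D.Gd v‖ ^ p) ^ (1 / p)

/-- `C_𝒟 = max_{v ≠ 0} ‖P_𝒟 v‖_L / ‖v‖_𝒟`. -/
noncomputable def CD (D : GradDisc L Lv V p) : ℝ :=
  sSup ((fun v : D.X => ‖D.P v‖ / D.dnorm v) '' {v : D.X | v ≠ 0})

/-- `W_𝒟(φ) = sup_{u ≠ 0} |⟨φ, G_𝒟 u⟩ + ⟨D φ, P_𝒟 u⟩| / ‖u‖_𝒟`, where `w = D φ`. -/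
noncomputable def WDdef (D : GradDisc L Lv V p) (φ : StrongDual ℝ Lv) (w : StrongDual ℝ L) : ℝ :=
  sSup ((fun u : D.X => |φ (D.Gd u) + w (D.P u)| / D.dnorm u) '' {u : D.X | u ≠ 0})

/-- `S_𝒟(φ) = min_v (‖P_𝒟 v − φ‖_L + ‖G_𝒟 v − G φ‖_Lv)`, where `gφ = G φ`. -/
noncomputable def SDdef (D : GradDisc L Lv V p) (φ : L) (gφ : Lv) : ℝ :=
  sInf (Set.range fun v : D.X => ‖D.P v - φ‖ + ‖D.Gd v - gφ‖)

end GradDisc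

/-- Coercivity of a sequence of gradient discretisations: `sup_m C_{𝒟_m} < ∞`. -/
def Coercive {V : Submodule ℝ (StrongDual ℝ L)} {p : ℝ} (D : ℕ → GradDisc L Lv V p) : Prop :=
  ∃ C : ℝ, ∀ m : ℕ, (D m).CD ≤ C

/-- Limit-conformity: `W_{𝒟_m}(φ) → 0` for every `φ ∈ 𝐖_D` (with `w = D φ`). -/
def LimitConforming (WG : Submodule ℝ L) (G : ↥WG →ₗ[ℝ] Lv)
    {V : Submodule ℝ (StrongDual ℝ L)} {p : ℝ} (D : ℕ → GradDisc L Lv V p) : Prop :=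
  ∀ (φ : StrongDual ℝ Lv) (w : StrongDual ℝ L), IsWDpair WG G φ w →
    Filter.Tendsto (fun m => (D m).WDdef φ w) Filter.atTop (𝓝 0)

/-- Consistency: `S_{𝒟_m}(φ) → 0` for every `φ ∈ W_G`. -/
def Consistent (WG : Submodule ℝ L) (G : ↥WG →ₗ[ℝ] Lv)
    {V : Submodule ℝ (StrongDual ℝ L)} {p : ℝ} (D : ℕ → GradDisc L Lv V p) : Prop :=
  ∀ u : ↥WG, Filter.Tendsto (fun m => (D m).SDdef (u : L) (G u)) Filter.atTop (𝓝 0)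

/-- Compactness: bounded discrete sequences have relatively compact reconstructions in `L`. -/
def CompactSeq {V : Submodule ℝ (StrongDual ℝ L)} {p : ℝ} (D : ℕ → GradDisc L Lv V p) : Prop :=
  ∀ u : (m : ℕ) → (D m).X, (∃ C : ℝ, ∀ m : ℕ, (D m).dnorm (u m) ≤ C) →
    IsCompact (closure (Set.range fun m => (D m).P (u m)))

/-!
Limit-conformity makes the pairings `⟨φ, G_𝒟 u_m⟩ + ⟨Dφ, P_𝒟 u_m⟩` tend to `0` for every
`φ ∈ 𝐖_D`. Only `|P_𝒟 u_m|_{L,V}` is controlled, so `P_𝒟 u_m` is bounded weakly: by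
Hahn–Banach and the norm equivalence on `W_G`, every `g ∈ L'` splits as `μ - Dφ` with `μ ∈ V`
and `φ ∈ 𝐖_D`, and both pieces are controlled; Banach–Steinhaus upgrades this to a norm bound.
Reflexivity and separability then give weakly convergent subsequences with limits `(a, b)`;
passing to the limit in the pairings gives `⟨φ, b⟩ + ⟨Dφ, a⟩ = 0` for all `φ ∈ 𝐖_D`, and since
the graph of `G` is closed, Hahn–Banach forces `a ∈ W_G` and `b = G a`.
-/

section Duality

variable {E : Type*} [NormedAddCommGroup E] [NormedSpace ℝ E]

theorem Submodule.exists_dual_forall_mem_eq_zero_of_notMem {S : Submodule ℝ E}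
    (hS : IsClosed (S : Set E)) {z : E} (hz : z ∉ S) :
    ∃ f : StrongDual ℝ E, (∀ y ∈ S, f y = 0) ∧ f z ≠ 0 := by
  -- the normed structure on `E ⧸ S` takes closedness of `S` as an instance argument
  have := hS
  obtain ⟨f, hf⟩ := SeparatingDual.exists_ne_zero (R := ℝ) (x := S.mkQ z)
    (by rwa [ne_eq, Submodule.mkQ_apply, Submodule.Quotient.mk_eq_zero])
  exact ⟨f.comp S.mkQL, fun y hy => by simp [(Submodule.Quotient.mk_eq_zero S).2 hy], hf⟩

theorem separableSpace_of_separableSpace_strongDual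
    [TopologicalSpace.SeparableSpace (StrongDual ℝ E)] : TopologicalSpace.SeparableSpace E := by
  obtain ⟨f, hf⟩ := TopologicalSpace.exists_dense_seq (StrongDual ℝ E)
  have h_norming : ∀ n, ∃ x : E, ‖x‖ ≤ 1 ∧ ‖f n‖ / 2 ≤ |f n x| := by
    intro n
    rcases eq_or_ne (f n) 0 with h0 | hn
    · exact ⟨0, by simp, by simp [h0]⟩
    · obtain ⟨x, hx1, hx2⟩ :=
        (f n).exists_lt_apply_of_lt_opNorm (half_lt_self (norm_pos_iff.mpr hn))
      exact ⟨x, hx1.le, hx2.le⟩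
  choose x hx1 hx2 using h_norming
  set S := (Submodule.span ℝ (Set.range x)).topologicalClosure
  suffices hS : S = ⊤ by
    rw [← TopologicalSpace.isSeparable_univ_iff, ← Submodule.top_coe (R := ℝ), ← hS,
      Submodule.topologicalClosure_coe]
    exact (Set.countable_range x).isSeparable.span.closure
  by_contra hS
  obtain ⟨z, -, hz⟩ := SetLike.exists_of_lt (lt_top_iff_ne_top.2 hS)
  obtain ⟨F, hF0, hFz⟩ := Submodule.exists_dual_forall_mem_eq_zero_of_notMem
    (Submodule.isClosed_topologicalClosure _) hz
  have hFpos : 0 < ‖F‖ := norm_pos_iff.2 fun h => hFz (by simp [h])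
  obtain ⟨n, hn⟩ := Metric.denseRange_iff.1 hf F (‖F‖ / 4) (by positivity)
  rw [dist_eq_norm] at hn
  have hFx : F (x n) = 0 :=
    hF0 _ (Submodule.le_topologicalClosure _ (Submodule.subset_span ⟨n, rfl⟩))
  -- `f n` is close to `F`, which kills `x n`, yet `x n` almost norms `f n`
  have h_small : |f n (x n)| ≤ ‖F‖ / 4 :=
    calc |f n (x n)| = ‖(F - f n) (x n)‖ := by simp [hFx]
      _ ≤ ‖F - f n‖ * ‖x n‖ := (F - f n).le_opNorm _
      _ ≤ ‖F‖ / 4 := by nlinarith [hx1 n, norm_nonneg (F - f n), norm_nonneg (x n)]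
  have h_large : ‖F‖ - ‖F‖ / 4 ≤ ‖f n‖ := by
    linarith [norm_sub_norm_le F (f n)]
  linarith [hx2 n]

theorem exists_subseq_weak_tendsto [TopologicalSpace.SeparableSpace E]
    (hrefl : Function.Surjective (inclusionInDoubleDual ℝ E)) {x : ℕ → E}
    (hx : ∀ g : StrongDual ℝ E, ∃ C, ∀ m, |g (x m)| ≤ C) :
    ∃ a : E, ∃ σ : ℕ → ℕ, StrictMono σ ∧
      ∀ g : StrongDual ℝ E, Tendsto (fun k => g (x (σ k))) atTop (𝓝 (g a)) := by
  have : TopologicalSpace.SeparableSpace (StrongDual ℝ (StrongDual ℝ E)) :=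
    hrefl.denseRange.separableSpace (inclusionInDoubleDual ℝ E).continuous
  have : TopologicalSpace.SeparableSpace (StrongDual ℝ E) :=
    separableSpace_of_separableSpace_strongDual
  obtain ⟨R, hR⟩ := banach_steinhaus (g := fun m => inclusionInDoubleDual ℝ E (x m))
    fun g => by simpa only [dual_def, Real.norm_eq_abs] using hx g
  obtain ⟨Ξ, -, σ, hσ, hΞ⟩ := WeakDual.isSeqCompact_closedBall ℝ (StrongDual ℝ E) 0 R
    (x := fun m => StrongDual.toWeakDual (inclusionInDoubleDual ℝ E (x m)))
    fun m => by simpa using hR m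
  obtain ⟨a, ha⟩ := hrefl (WeakDual.toStrongDual Ξ)
  refine ⟨a, σ, hσ, fun g => ?_⟩
  have hg : Ξ g = g a := by rw [← dual_def ℝ E a g, ha]; rfl
  exact hg ▸ ((WeakDual.eval_continuous g).tendsto Ξ).comp hΞ

end Duality

section Seminorm

variable {V : Submodule ℝ (StrongDual ℝ L)}

theorem semV_nonneg (u : L) : 0 ≤ semV V u :=
  Real.sSup_nonneg (by rintro _ ⟨μ, -, rfl⟩; positivity)

theorem abs_apply_le_semV_mul {μ : StrongDual ℝ L} (hμ : μ ∈ V) (u : L) :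
    |μ u| ≤ semV V u * ‖μ‖ := by
  rcases eq_or_ne μ 0 with rfl | hne
  · simp
  have h_bdd : BddAbove ((fun μ : StrongDual ℝ L => |μ u| / ‖μ‖) '' {μ | μ ∈ V ∧ μ ≠ 0}) :=
    ⟨‖u‖, by
      rintro _ ⟨ν, -, rfl⟩
      exact div_le_of_le_mul₀ (norm_nonneg _) (norm_nonneg _)
        (by simpa [mul_comm] using ν.le_opNorm u)⟩
  exact (div_le_iff₀ (norm_pos_iff.2 hne)).1 (le_csSup h_bdd ⟨μ, ⟨hμ, hne⟩, rfl⟩)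

theorem semV_le_of_forall {u : L} {c : ℝ} (hc : 0 ≤ c) (h : ∀ μ ∈ V, |μ u| ≤ c * ‖μ‖) :
    semV V u ≤ c := by
  refine Real.sSup_le ?_ hc
  rintro _ ⟨μ, ⟨hμ, hne⟩, rfl⟩
  exact div_le_of_le_mul₀ (norm_nonneg _) hc (h μ hμ)

theorem semV_le_norm (u : L) : semV V u ≤ ‖u‖ :=
  semV_le_of_forall (norm_nonneg u) fun μ _ => by simpa [mul_comm] using μ.le_opNorm u

theorem semV_eq_zero_of_forall {u : L} (h : ∀ μ ∈ V, μ u = 0) : semV V u = 0 :=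
  (semV_le_of_forall le_rfl fun μ hμ => by simp [h μ hμ]).antisymm (semV_nonneg u)

@[simp]
theorem semV_zero : semV V (0 : L) = 0 :=
  semV_eq_zero_of_forall fun μ _ => map_zero μ

theorem semV_add_le (u v : L) : semV V (u + v) ≤ semV V u + semV V v :=
  semV_le_of_forall (add_nonneg (semV_nonneg u) (semV_nonneg v)) fun μ hμ =>
    calc |μ (u + v)| ≤ |μ u| + |μ v| := by rw [map_add]; exact abs_add_le _ _
      _ ≤ semV V u * ‖μ‖ + semV V v * ‖μ‖ :=
        add_le_add (abs_apply_le_semV_mul hμ u) (abs_apply_le_semV_mul hμ v)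
      _ = (semV V u + semV V v) * ‖μ‖ := by ring

theorem semV_smul_le (c : ℝ) (u : L) : semV V (c • u) ≤ |c| * semV V u :=
  semV_le_of_forall (mul_nonneg (abs_nonneg c) (semV_nonneg u)) fun μ hμ => by
    rw [map_smul, smul_eq_mul, abs_mul, mul_assoc]
    exact mul_le_mul_of_nonneg_left (abs_apply_le_semV_mul hμ u) (abs_nonneg c)

theorem semV_smul (c : ℝ) (u : L) : semV V (c • u) = |c| * semV V u := by
  rcases eq_or_ne c 0 with rfl | hc
  · simp
  refine (semV_smul_le c u).antisymm ?_
  calc |c| * semV V u = |c| * semV V (c⁻¹ • c • u) := by rw [inv_smul_smul₀ hc]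
    _ ≤ |c| * (|c⁻¹| * semV V (c • u)) := by gcongr; exact semV_smul_le _ _
    _ = semV V (c • u) := by
      rw [abs_inv, ← mul_assoc, mul_inv_cancel₀ (abs_ne_zero.2 hc), one_mul]

theorem semV_neg (u : L) : semV V (-u) = semV V u := by
  simpa using semV_smul (V := V) (-1) u

end Seminorm

section PNorm

variable {p a b : ℝ}

theorem le_rpow_add_rpow_one_div (hp : 0 < p) (ha : 0 ≤ a) (hb : 0 ≤ b) :
    a ≤ (a ^ p + b ^ p) ^ (1 / p) :=
  calc a = (a ^ p) ^ (1 / p) := by rw [one_div, Real.rpow_rpow_inv ha hp.ne']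
    _ ≤ (a ^ p + b ^ p) ^ (1 / p) := by
      gcongr
      exact le_add_of_nonneg_right (Real.rpow_nonneg hb p)

theorem mul_rpow_add_rpow_one_div (hp : 0 < p) {r : ℝ} (hr : 0 ≤ r) (ha : 0 ≤ a) (hb : 0 ≤ b) :
    ((r * a) ^ p + (r * b) ^ p) ^ (1 / p) = r * (a ^ p + b ^ p) ^ (1 / p) := by
  rw [Real.mul_rpow hr ha, Real.mul_rpow hr hb, ← mul_add, Real.mul_rpow (by positivity)
    (by positivity), one_div, Real.rpow_rpow_inv hr hp.ne']

theorem rpow_add_rpow_one_div_le_add (hp : 1 ≤ p) {a₁ a₂ b₁ b₂ : ℝ} (ha : 0 ≤ a) (hb : 0 ≤ b)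
    (ha₁ : 0 ≤ a₁) (ha₂ : 0 ≤ a₂) (hb₁ : 0 ≤ b₁) (hb₂ : 0 ≤ b₂)
    (h_a : a ≤ a₁ + a₂) (h_b : b ≤ b₁ + b₂) :
    (a ^ p + b ^ p) ^ (1 / p) ≤ (a₁ ^ p + b₁ ^ p) ^ (1 / p) + (a₂ ^ p + b₂ ^ p) ^ (1 / p) := by
  have h_minkowski := Real.Lp_add_le_of_nonneg (s := Finset.univ) (f := ![a₁, b₁])
    (g := ![a₂, b₂]) hp (by intro i _; fin_cases i <;> simpa) (by intro i _; fin_cases i <;> simpa)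
  simp only [Fin.sum_univ_two, Matrix.cons_val_zero, Matrix.cons_val_one] at h_minkowski
  refine le_trans ?_ h_minkowski
  gcongr

end PNorm

namespace GradDisc

variable {V : Submodule ℝ (StrongDual ℝ L)} {p : ℝ} (D : GradDisc L Lv V p)

theorem dnorm_nonneg (v : D.X) : 0 ≤ D.dnorm v :=
  Real.rpow_nonneg (add_nonneg (Real.rpow_nonneg (semV_nonneg _) p)
    (Real.rpow_nonneg (norm_nonneg _) p)) _

theorem semV_le_dnorm (hp : 0 < p) (v : D.X) : semV V (D.P v) ≤ D.dnorm v :=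
  le_rpow_add_rpow_one_div hp (semV_nonneg _) (norm_nonneg _)

theorem norm_Gd_le_dnorm (hp : 0 < p) (v : D.X) : ‖D.Gd v‖ ≤ D.dnorm v := by
  rw [dnorm, add_comm]
  exact le_rpow_add_rpow_one_div hp (norm_nonneg _) (semV_nonneg _)

theorem dnorm_smul (hp : 0 < p) (c : ℝ) (v : D.X) : D.dnorm (c • v) = |c| * D.dnorm v := by
  simp only [dnorm, map_smul, semV_smul, norm_smul, Real.norm_eq_abs]
  exact mul_rpow_add_rpow_one_div hp (abs_nonneg c) (semV_nonneg _) (norm_nonneg _)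

theorem dnorm_add_le (hp : 1 ≤ p) (v w : D.X) : D.dnorm (v + w) ≤ D.dnorm v + D.dnorm w := by
  simp only [dnorm, map_add]
  exact rpow_add_rpow_one_div_le_add hp (semV_nonneg _) (norm_nonneg _) (semV_nonneg _)
    (semV_nonneg _) (norm_nonneg _) (norm_nonneg _) (semV_add_le _ _) (norm_add_le _ _)

theorem dnorm_eq_zero_iff (hp : 0 < p) (v : D.X) : D.dnorm v = 0 ↔ v = 0 :=
  ⟨D.dnorm_definite v, by rintro rfl; simpa using D.dnorm_smul hp 0 0⟩

theorem exists_abs_pairing_le_mul_dnorm (hp : 1 ≤ p) (φ : StrongDual ℝ Lv)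
    (w : StrongDual ℝ L) : ∃ K, 0 ≤ K ∧ ∀ v : D.X, |φ (D.Gd v) + w (D.P v)| ≤ K * D.dnorm v := by
  have hp0 : 0 < p := one_pos.trans_le hp
  let : Norm D.X := ⟨D.dnorm⟩
  let : NormedAddCommGroup D.X := NormedAddCommGroup.ofCore (𝕜 := ℝ)
    { norm_nonneg := D.dnorm_nonneg
      norm_smul := D.dnorm_smul hp0
      norm_triangle := D.dnorm_add_le hp
      norm_eq_zero_iff := D.dnorm_eq_zero_iff hp0 }
  let : NormedSpace ℝ D.X := ⟨fun c v => (D.dnorm_smul hp0 c v).le⟩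
  let ℓ : D.X →L[ℝ] ℝ :=
    LinearMap.toContinuousLinearMap (φ.toLinearMap ∘ₗ D.Gd + w.toLinearMap ∘ₗ D.P)
  exact ⟨‖ℓ‖, norm_nonneg ℓ, ℓ.le_opNorm⟩

theorem WDdef_nonneg (φ : StrongDual ℝ Lv) (w : StrongDual ℝ L) : 0 ≤ D.WDdef φ w :=
  Real.sSup_nonneg (by rintro _ ⟨v, -, rfl⟩; exact div_nonneg (abs_nonneg _) (D.dnorm_nonneg v))

theorem abs_pairing_le_WDdef_mul_dnorm (hp : 1 ≤ p) (φ : StrongDual ℝ Lv)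
    (w : StrongDual ℝ L) (v : D.X) : |φ (D.Gd v) + w (D.P v)| ≤ D.WDdef φ w * D.dnorm v := by
  rcases eq_or_ne v 0 with rfl | hv
  · simpa using mul_nonneg (D.WDdef_nonneg φ w) (D.dnorm_nonneg 0)
  have hv_pos : 0 < D.dnorm v :=
    (D.dnorm_nonneg v).lt_of_ne' ((D.dnorm_eq_zero_iff (one_pos.trans_le hp) v).not.2 hv)
  obtain ⟨K, hK0, hK⟩ := D.exists_abs_pairing_le_mul_dnorm hp φ w
  have h_bdd : BddAbove ((fun u : D.X => |φ (D.Gd u) + w (D.P u)| / D.dnorm u) '' {u | u ≠ 0}) :=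
    ⟨K, by
      rintro _ ⟨u, -, rfl⟩
      exact div_le_of_le_mul₀ (D.dnorm_nonneg u) hK0 (hK u)⟩
  exact (div_le_iff₀ hv_pos).1 (le_csSup h_bdd ⟨v, hv, rfl⟩)

end GradDisc

theorem LimitConforming.tendsto_pairing {WG : Submodule ℝ L} {G : ↥WG →ₗ[ℝ] Lv}
    {V : Submodule ℝ (StrongDual ℝ L)} {p : ℝ} {D : ℕ → GradDisc L Lv V p}
    (hlc : LimitConforming WG G D) (hp : 1 ≤ p) {um : (m : ℕ) → (D m).X} {C : ℝ}
    (hC : ∀ m, (D m).dnorm (um m) ≤ C) {φ : StrongDual ℝ Lv} {w : StrongDual ℝ L}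
    (hφw : IsWDpair WG G φ w) :
    Tendsto (fun m => φ ((D m).Gd (um m)) + w ((D m).P (um m))) atTop (𝓝 0) := by
  refine squeeze_zero_norm (fun m => ?_) (by simpa using (hlc φ w hφw).mul_const C)
  exact ((D m).abs_pairing_le_WDdef_mul_dnorm hp φ w (um m)).trans
    (mul_le_mul_of_nonneg_left (hC m) ((D m).WDdef_nonneg φ w))

theorem mem_of_abs_apply_le_mul_semV (hrefl : Function.Surjective (inclusionInDoubleDual ℝ L))
    {V : Submodule ℝ (StrongDual ℝ L)} (hV : IsClosed (V : Set (StrongDual ℝ L)))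
    {μ : StrongDual ℝ L} {c : ℝ} (hμ : ∀ a, |μ a| ≤ c * semV V a) : μ ∈ V := by
  by_contra hμV
  obtain ⟨Ξ, hΞV, hΞμ⟩ := Submodule.exists_dual_forall_mem_eq_zero_of_notMem hV hμV
  obtain ⟨a, rfl⟩ := hrefl Ξ
  have ha : semV V a = 0 := semV_eq_zero_of_forall fun ν hν => by simpa using hΞV ν hν
  exact hΞμ (by simpa [ha] using hμ a)

theorem exists_eq_of_forall_isWDpair {WG : Submodule ℝ L} {G : ↥WG →ₗ[ℝ] Lv}
    (hG : IsClosed (Set.range fun u : ↥WG => ((u : L), G u))) {a : L} {b : Lv}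
    (h : ∀ φ w, IsWDpair WG G φ w → φ b + w a = 0) : ∃ u : ↥WG, (u : L) = a ∧ G u = b := by
  let graph := LinearMap.range (WG.subtype.prod G)
  suffices hab : (a, b) ∈ graph by
    obtain ⟨u, hu⟩ := hab
    exact ⟨u, congrArg Prod.fst hu, congrArg Prod.snd hu⟩
  by_contra hab
  obtain ⟨f, hf_graph, hf_ab⟩ := Submodule.exists_dual_forall_mem_eq_zero_of_notMem hG hab
  have hf : ∀ x y, f (x, y) = f.comp (.inr ℝ L Lv) y + f.comp (.inl ℝ L Lv) x := fun x y => by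
    simp [← map_add, add_comm]
  refine hf_ab ((hf a b).trans (h _ _ fun u => ?_))
  rw [← hf]
  exact hf_graph _ ⟨u, rfl⟩

theorem exists_mem_isWDpair_sub (hrefl : Function.Surjective (inclusionInDoubleDual ℝ L))
    {V : Submodule ℝ (StrongDual ℝ L)} (hV : IsClosed (V : Set (StrongDual ℝ L)))
    {WG : Submodule ℝ L} {G : ↥WG →ₗ[ℝ] Lv} {C : ℝ} (hC : 0 ≤ C)
    (hcoer : ∀ u : ↥WG, ‖(u : L)‖ ≤ C * (semV V u + ‖G u‖)) (g : StrongDual ℝ L) :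
    ∃ μ ∈ V, ∃ φ : StrongDual ℝ Lv, IsWDpair WG G φ (μ - g) := by
  set c := C * ‖g‖
  have hc : 0 ≤ c := by positivity
  -- `μ` and `φ` are the two components of a Hahn–Banach extension of `(u, G u) ↦ g u`
  -- dominated by `c * (|a|_{L,V} + ‖b‖)`; the domination puts `μ` in `V`.
  let N : L × Lv → ℝ := fun z => c * (semV V z.1 + ‖z.2‖)
  have hN_neg : ∀ z, N (-z) = N z := fun z => by simp [N, semV_neg]
  let graph := LinearMap.range (WG.subtype.prod G)
  obtain ⟨F, hF_graph, hF_le⟩ := exists_extension_of_le_sublinear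
    ⟨graph, g.toLinearMap ∘ₗ LinearMap.fst ℝ L Lv ∘ₗ graph.subtype⟩ N
    (fun r hr z => by
      simp only [N, Prod.smul_fst, Prod.smul_snd, semV_smul, norm_smul, Real.norm_eq_abs,
        abs_of_pos hr]
      ring)
    (fun z z' => by
      simp only [N, Prod.fst_add, Prod.snd_add, ← mul_add]
      refine mul_le_mul_of_nonneg_left ?_ hc
      linarith [semV_add_le (V := V) z.1 z'.1, norm_add_le z.2 z'.2])
    (by
      rintro ⟨_, u, rfl⟩
      calc g u ≤ ‖g‖ * ‖(u : L)‖ := (le_abs_self _).trans (g.le_opNorm u)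
        _ ≤ ‖g‖ * (C * (semV V u + ‖G u‖)) := by gcongr; exact hcoer u
        _ = N (u, G u) := by ring)
  have hF_abs : ∀ z, |F z| ≤ N z := fun z =>
    abs_le.2 ⟨by linarith [hF_le (-z), map_neg F z, hN_neg z], hF_le z⟩
  have hμ : ∀ a, |F (a, 0)| ≤ c * semV V a := fun a => by simpa [N] using hF_abs (a, 0)
  let μ : StrongDual ℝ L := (F ∘ₗ LinearMap.inl ℝ L Lv).mkContinuous c fun a =>
    (hμ a).trans (mul_le_mul_of_nonneg_left (semV_le_norm a) hc)
  let φ : StrongDual ℝ Lv := (F ∘ₗ LinearMap.inr ℝ L Lv).mkContinuous c fun b => by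
    simpa [N] using hF_abs (0, b)
  refine ⟨μ, mem_of_abs_apply_le_mul_semV hrefl hV hμ, φ, fun u => ?_⟩
  have hFu : F (u, 0) + F (0, G u) = g u := by
    rw [← map_add, Prod.mk_add_mk, add_zero, zero_add]
    exact hF_graph ⟨_, u, rfl⟩
  change F (0, G u) + (F (u, 0) - g u) = 0
  linarith

theorem exists_bound_apply_of_isWDpair {WG : Submodule ℝ L} {G : ↥WG →ₗ[ℝ] Lv}
    {V : Submodule ℝ (StrongDual ℝ L)}
    (hdecomp : ∀ g : StrongDual ℝ L, ∃ μ ∈ V, ∃ φ, IsWDpair WG G φ (μ - g))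
    {x : ℕ → L} {y : ℕ → Lv} {C : ℝ} (hx : ∀ m, semV V (x m) ≤ C) (hy : ∀ m, ‖y m‖ ≤ C)
    (hxy : ∀ φ w, IsWDpair WG G φ w → ∃ B, ∀ m, |φ (y m) + w (x m)| ≤ B)
    (g : StrongDual ℝ L) : ∃ B, ∀ m, |g (x m)| ≤ B := by
  obtain ⟨μ, hμ, φ, hφ⟩ := hdecomp g
  obtain ⟨B, hB⟩ := hxy φ (μ - g) hφ
  refine ⟨C * ‖μ‖ + ‖φ‖ * C + B, fun m => ?_⟩
  have h_split : g (x m) = μ (x m) + φ (y m) - (φ (y m) + (μ - g) (x m)) := by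
    simp only [sub_apply]
    ring
  have hμx : |μ (x m)| ≤ C * ‖μ‖ :=
    (abs_apply_le_semV_mul hμ _).trans (mul_le_mul_of_nonneg_right (hx m) (norm_nonneg μ))
  have hφy : |φ (y m)| ≤ ‖φ‖ * C :=
    (φ.le_opNorm _).trans (mul_le_mul_of_nonneg_left (hy m) (norm_nonneg φ))
  rw [h_split]
  linarith [abs_sub (μ (x m) + φ (y m)) (φ (y m) + (μ - g) (x m)),
    abs_add_le (μ (x m)) (φ (y m)), hB m]

theorem regularity_of_the_limit_general
    [TopologicalSpace.SeparableSpace L] [TopologicalSpace.SeparableSpace Lv]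
    (hreflL : Function.Surjective ⇑(inclusionInDoubleDual ℝ L))
    (hreflLv : Function.Surjective ⇑(inclusionInDoubleDual ℝ Lv))
    (WG : Submodule ℝ L)
    (G : ↥WG →ₗ[ℝ] Lv)
    (hGclosed : IsClosed (Set.range fun u : ↥WG => ((u : L), G u)))
    (p : ℝ) (hp : 1 < p)
    (V : Submodule ℝ (StrongDual ℝ L)) (hVclosed : IsClosed (V : Set (StrongDual ℝ L)))
    (CWGV : ℝ) (hCWGV : 0 < CWGV)
    (hequiv : ∀ u : ↥WG, (‖(u : L)‖ ^ p + ‖G u‖ ^ p) ^ (1 / p) ≤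
      CWGV * (semV V (u : L) ^ p + ‖G u‖ ^ p) ^ (1 / p))
    (D : ℕ → GradDisc L Lv V p)
    (hlc : LimitConforming WG G D)
    (um : (m : ℕ) → (D m).X)
    (hbd : ∃ C : ℝ, ∀ m : ℕ, (D m).dnorm (um m) ≤ C) :
    ∃ u : ↥WG, ∃ φ : ℕ → ℕ, StrictMono φ ∧
      (∀ g : StrongDual ℝ L,
        Tendsto (fun k => g ((D (φ k)).P (um (φ k)))) atTop (𝓝 (g (u : L)))) ∧
      (∀ g : StrongDual ℝ Lv,
        Tendsto (fun k => g ((D (φ k)).Gd (um (φ k)))) atTop (𝓝 (g (G u)))) := by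
  obtain ⟨C, hC⟩ := hbd
  have hp0 : 0 < p := one_pos.trans hp
  set x : ℕ → L := fun m => (D m).P (um m)
  set y : ℕ → Lv := fun m => (D m).Gd (um m)
  have hy : ∀ m, ‖y m‖ ≤ C := fun m => ((D m).norm_Gd_le_dnorm hp0 _).trans (hC m)
  have hpair : ∀ φ w, IsWDpair WG G φ w → Tendsto (fun m => φ (y m) + w (x m)) atTop (𝓝 0) :=
    fun φ w hφw => hlc.tendsto_pairing hp.le hC hφw
  have hcoer : ∀ u : ↥WG, ‖(u : L)‖ ≤ CWGV * (semV V u + ‖G u‖) := fun u =>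
    (le_rpow_add_rpow_one_div hp0 (norm_nonneg _) (norm_nonneg _)).trans <| (hequiv u).trans <|
      mul_le_mul_of_nonneg_left
        (Real.rpow_add_rpow_le_add (semV_nonneg _) (norm_nonneg _) hp.le) hCWGV.le
  have hx_weak : ∀ g : StrongDual ℝ L, ∃ B, ∀ m, |g (x m)| ≤ B :=
    exists_bound_apply_of_isWDpair (exists_mem_isWDpair_sub hreflL hVclosed hCWGV.le hcoer)
      (fun m => ((D m).semV_le_dnorm hp0 _).trans (hC m)) hy fun φ w hφw =>
        let ⟨B, hB⟩ := (hpair φ w hφw).abs.bddAbove_range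
        ⟨B, fun m => hB ⟨m, rfl⟩⟩
  obtain ⟨a, σ, hσ, ha⟩ := exists_subseq_weak_tendsto hreflL hx_weak
  obtain ⟨b, τ, hτ, hb⟩ := exists_subseq_weak_tendsto hreflLv (x := y ∘ σ) fun g =>
    ⟨‖g‖ * C, fun m => (g.le_opNorm _).trans (mul_le_mul_of_nonneg_left (hy _) (norm_nonneg g))⟩
  obtain ⟨u, rfl, rfl⟩ := exists_eq_of_forall_isWDpair hGclosed fun φ w hφw =>
    tendsto_nhds_unique ((hb φ).add ((ha w).comp hτ.tendsto_atTop))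
      ((hpair φ w hφw).comp (hσ.comp hτ).tendsto_atTop)
  exact ⟨u, σ ∘ τ, hσ.comp hτ, fun g => (ha g).comp hτ.tendsto_atTop, hb⟩

theorem regularity_of_the_limit
    [CompleteSpace L] [CompleteSpace Lv]
    [TopologicalSpace.SeparableSpace L] [TopologicalSpace.SeparableSpace Lv]
    (hreflL : Function.Surjective ⇑(inclusionInDoubleDual ℝ L))
    (hreflLv : Function.Surjective ⇑(inclusionInDoubleDual ℝ Lv))
    (WG : Submodule ℝ L) (hWGdense : Dense (WG : Set L))
    (G : ↥WG →ₗ[ℝ] Lv)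
    (hGclosed : IsClosed (Set.range fun u : ↥WG => ((u : L), G u)))
    (p : ℝ) (hp : 1 < p)
    (V : Submodule ℝ (StrongDual ℝ L)) (hVclosed : IsClosed (V : Set (StrongDual ℝ L)))
    (CWGV : ℝ) (hCWGV : 0 < CWGV)
    (hequiv : ∀ u : ↥WG, (‖(u : L)‖ ^ p + ‖G u‖ ^ p) ^ (1 / p) ≤
      CWGV * (semV V (u : L) ^ p + ‖G u‖ ^ p) ^ (1 / p))
    (D : ℕ → GradDisc L Lv V p)
    (hlc : LimitConforming WG G D)
    (um : (m : ℕ) → (D m).X)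
    (hbd : ∃ C : ℝ, ∀ m : ℕ, (D m).dnorm (um m) ≤ C) :
    ∃ u : ↥WG, ∃ φ : ℕ → ℕ, StrictMono φ ∧
      (∀ g : StrongDual ℝ L,
        Tendsto (fun k => g ((D (φ k)).P (um (φ k)))) atTop (𝓝 (g (u : L)))) ∧
      (∀ g : StrongDual ℝ Lv,
        Tendsto (fun k => g ((D (φ k)).Gd (um (φ k)))) atTop (𝓝 (g (G u)))) :=
  regularity_of_the_limit_general hreflL hreflLv WG G hGclosed p hp V hVclosed CWGV hCWGV hequiv D
    hlc um hbd
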